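/- arXiv:1507.06755 — 2 statements merged into one kernel-verified Lean document; each statement's English description precedes it below -/
import Mathlib

section
/- If λ ∈ Γ_m with coordinates ordered decreasingly λ_1 ≥ λ_2 ≥ ⋯ ≥ λ_n, then S_{m-1}(λ) ≥ λ_1 λ_2 ⋯ λ_{m-1}. -/
open Finset

/-- The k-th elementary symmetric polynomial of n real variables. -/
noncomputable def S (n : ℕ) (k : ℕ) (lam : Fin n → ℝ) : ℝ :=
  ∑ A ∈ Finset.powersetCard k (Finset.univ : Finset (Fin n)), ∏ i ∈ A, lam i

/-- The Gårding cone Γ_m. -/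
def GammaCone (n m : ℕ) : Set (Fin n → ℝ) :=
  {lam | ∀ k, 1 ≤ k → k ≤ m → 0 < S n k lam}

/-- Restricted elementary symmetric polynomial: the k-th elementary symmetric
polynomial of the variables with indices in T. -/
noncomputable def SRes (n : ℕ) (T : Finset (Fin n)) (k : ℕ) (lam : Fin n → ℝ) : ℝ :=
  ∑ A ∈ Finset.powersetCard k T, ∏ i ∈ A, lam i

/-!
Write `λ = (λ₁, λ')`. Then `S_{m-1}(λ) = S_{m-1}(λ') + λ₁ S_{m-2}(λ')`, so the claim follows by
induction on `m` once we know that `λ₁ > 0` (it is the largest entry and `S₁(λ) > 0`) and that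
deleting a coordinate maps `Γ_m` into `Γ_{m-1}`. For the latter, suppose `λ ∈ Γ_{k+2}`,
`λ' ∈ Γ_k` but `S_{k+1}(λ') ≤ 0`. Translating all entries by the same `u ≥ 0` keeps `λ` in
`Γ_{k+2}` and makes `S_{k+1}(λ')` positive for large `u`, so we may assume `S_{k+1}(λ') = 0`.
Then `S_{k+2}(λ') = S_{k+2}(λ) > 0` and `S_k(λ') > 0`, which contradicts the case
`S_{k+1} = 0` of Newton's inequality `S_{k+1}² ≥ c S_k S_{k+2}`. That case follows from Rolle's
theorem (the derivative of a real-rooted polynomial is real-rooted), which reduces it to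
`k + 2` variables, where passing to reciprocals turns it into `(Σ xᵢ)² = Σ xᵢ² + 2 S₂`.
-/

open Polynomial Multiset

namespace Polynomial

theorem taylor_prod_X_add_C {R : Type*} [CommSemiring R] (s : Multiset R) (u : R) :
    taylor u (s.map (fun x ↦ X + C x)).prod = ((s.map (· + u)).map (fun x ↦ X + C x)).prod := by
  rw [taylor_apply, multiset_prod_comp, Multiset.map_map, Multiset.map_map]
  congr 1
  refine Multiset.map_congr rfl fun x _ ↦ ?_
  simp only [Function.comp_apply, add_comp, X_comp, C_comp, C_add]
  ring

theorem coeff_le_coeff_taylor {R : Type*} [CommSemiring R] [PartialOrder R] [IsOrderedRing R]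
    {p : R[X]} {d : ℕ} {u : R} (hu : 0 ≤ u) (hp : ∀ i, d ≤ i → 0 ≤ p.coeff i) :
    p.coeff d ≤ (taylor u p).coeff d := by
  rw [taylor_coeff, eval_eq_sum_range]
  have hterm : ∀ i, 0 ≤ (hasseDeriv d p).coeff i * u ^ i := fun i ↦ by
    rw [hasseDeriv_coeff]
    exact mul_nonneg (mul_nonneg (Nat.cast_nonneg _) (hp _ (by omega))) (pow_nonneg hu i)
  calc p.coeff d = (hasseDeriv d p).coeff 0 * u ^ 0 := by simp [hasseDeriv_coeff]
    _ ≤ _ := Finset.single_le_sum (fun i _ ↦ hterm i) (Finset.mem_range.mpr (Nat.succ_pos _))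

theorem exists_derivative_prod_X_add_C_eq (s : Multiset ℝ) :
    ∃ t : Multiset ℝ, card t = card s - 1 ∧
      derivative (s.map (fun x ↦ X + C x)).prod =
        C (card s : ℝ) * (t.map (fun x ↦ X + C x)).prod := by
  obtain rfl | hs := eq_or_ne s 0
  · exact ⟨0, by simp⟩
  have hN : 1 ≤ card s := card_pos.mpr hs
  have hp : (s.map (fun x ↦ X + C x)).prod = ((s.map Neg.neg).map (fun x ↦ X - C x)).prod := by
    simp [sub_eq_add_neg]
  rw [hp]
  set p := ((s.map Neg.neg).map (fun x ↦ X - C x)).prod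
  have hpdeg : p.natDegree = card s := by
    rw [natDegree_multiset_prod_X_sub_C_eq_card, Multiset.card_map]
  have hproots : card p.roots = card s := by
    rw [roots_multiset_prod_X_sub_C, Multiset.card_map]
  have hqcoeff : (derivative p).coeff (card s - 1) = card s := by
    rw [coeff_derivative, Nat.sub_add_cancel hN, ← hpdeg,
      (monic_multisetProd_X_sub_C _).coeff_natDegree]
    push_cast [hpdeg, Nat.cast_sub hN]
    ring
  have hqdeg : (derivative p).natDegree = card s - 1 :=
    le_antisymm (hpdeg ▸ natDegree_derivative_le p)
      (le_natDegree_of_ne_zero (by rw [hqcoeff]; positivity))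
  have hqroots : card (derivative p).roots = (derivative p).natDegree := by
    have := card_roots_le_derivative p
    have := card_roots' (derivative p)
    omega
  refine ⟨(derivative p).roots.map Neg.neg, by simp [hqroots, hqdeg], ?_⟩
  conv_lhs => rw [← C_leadingCoeff_mul_prod_multiset_X_sub_C hqroots]
  rw [leadingCoeff, hqdeg, hqcoeff]
  simp [sub_eq_add_neg]

end Polynomial

namespace Multiset

section CommSemiring

variable {R : Type*} [CommSemiring R]

theorem esymm_zero (s : Multiset R) : s.esymm 0 = 1 := by
  simp [esymm]

theorem esymm_cons (a : R) (s : Multiset R) (k : ℕ) :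
    (a ::ₘ s).esymm (k + 1) = s.esymm (k + 1) + a * s.esymm k := by
  simp [esymm, powersetCard_cons, sum_map_mul_left]

theorem esymm_eq_zero_of_card_lt {s : Multiset R} {k : ℕ} (h : card s < k) :
    s.esymm k = 0 := by
  simp [esymm, powersetCard_eq_empty _ h]

theorem esymm_card (s : Multiset R) : s.esymm (card s) = s.prod := by
  induction s using Multiset.induction with
  | empty => simp [esymm_zero]
  | cons a s ih => simp [esymm_cons, ih, esymm_eq_zero_of_card_lt]

theorem esymm_one (s : Multiset R) : s.esymm 1 = s.sum := by
  simp [esymm, powersetCard_one]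

theorem sq_sum_eq_sum_sq_add_two_mul_esymm_two (s : Multiset R) :
    s.sum ^ 2 = (s.map (· ^ 2)).sum + 2 * s.esymm 2 := by
  induction s using Multiset.induction with
  | empty => simp [esymm_eq_zero_of_card_lt (show card (0 : Multiset R) < 2 by simp)]
  | cons a s ih =>
    rw [esymm_cons, esymm_one, sum_cons, map_cons, sum_cons, add_sq, ih]
    ring

theorem esymm_map_add_eq_coeff_taylor (s : Multiset R) (u : R) {j : ℕ} (hj : j ≤ card s) :
    (s.map (· + u)).esymm j = (taylor u (s.map (fun x ↦ X + C x)).prod).coeff (card s - j) := by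
  rw [taylor_prod_X_add_C, prod_X_add_C_coeff _ (by simp), Multiset.card_map,
    Nat.sub_sub_self hj]

end CommSemiring

section OrderedSemiring

variable {R : Type*} [CommSemiring R] [PartialOrder R] [IsStrictOrderedRing R]

theorem esymm_pos {s : Multiset R} (hs : ∀ x ∈ s, 0 < x) {k : ℕ} (hk : k ≤ card s) :
    0 < s.esymm k := by
  induction s using Multiset.induction generalizing k with
  | empty => simp_all [esymm_zero]
  | cons a s ih =>
    rcases k with _ | k
    · simp [esymm_zero]
    have hs' : ∀ x ∈ s, 0 < x := fun x hx ↦ hs x (mem_cons_of_mem hx)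
    rw [card_cons] at hk
    have hlast : 0 < a * s.esymm k := mul_pos (hs a (mem_cons_self a s)) (ih hs' (by omega))
    rw [esymm_cons]
    rcases Nat.lt_or_ge (card s) (k + 1) with hlt | hle
    · rw [esymm_eq_zero_of_card_lt hlt, zero_add]
      exact hlast
    · exact add_pos (ih hs' hle) hlast

theorem esymm_le_esymm_map_add {s : Multiset R} {j : ℕ} (hs : ∀ i ≤ j, 0 ≤ s.esymm i)
    {u : R} (hu : 0 ≤ u) : s.esymm j ≤ (s.map (· + u)).esymm j := by
  rcases le_or_gt j (card s) with hj | hj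
  · have hcoeff := prod_X_add_C_coeff s (Nat.sub_le (card s) j)
    rw [Nat.sub_sub_self hj] at hcoeff
    rw [esymm_map_add_eq_coeff_taylor s u hj, ← hcoeff]
    refine coeff_le_coeff_taylor hu fun i hi ↦ ?_
    rcases le_or_gt i (card s) with hi' | hi'
    · rw [prod_X_add_C_coeff s hi']
      exact hs _ (by omega)
    · refine (coeff_eq_zero_of_natDegree_lt ?_).ge
      rw [natDegree_multiset_prod_of_monic _ (by simp [monic_X_add_C])]
      simpa using hi'
  · simp [esymm_eq_zero_of_card_lt, hj]

end OrderedSemiring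

theorem esymm_map_inv_mul_prod {K : Type*} [Field K] {s : Multiset K} (hs : ∀ x ∈ s, x ≠ 0)
    {i j : ℕ} (hij : i + j = card s) : (s.map (·⁻¹)).esymm j * s.prod = s.esymm i := by
  induction s using Multiset.induction generalizing i j with
  | empty => simp_all [esymm_zero]
  | cons a s ih =>
    have ha : a ≠ 0 := hs a (mem_cons_self a s)
    have hs' : ∀ x ∈ s, x ≠ 0 := fun x hx ↦ hs x (mem_cons_of_mem hx)
    rw [card_cons] at hij
    rcases j with _ | j
    · rw [esymm_zero, one_mul, show i = card (a ::ₘ s) by simpa using hij, esymm_card]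
    rw [map_cons, esymm_cons, prod_cons]
    rcases i with _ | i
    · have hlt : card (s.map (·⁻¹)) < j + 1 := by rw [Multiset.card_map]; omega
      have h := ih hs' (i := 0) (j := j) (by omega)
      rw [esymm_zero] at h
      rw [esymm_eq_zero_of_card_lt hlt, esymm_zero, ← h]
      field_simp
      ring
    · rw [esymm_cons, ← ih hs' (i := i) (j := j + 1) (by omega),
        ← ih hs' (i := i + 1) (j := j) (by omega)]
      field_simp
      ring

theorem continuous_esymm_map_add (s : Multiset ℝ) (j : ℕ) :
    Continuous fun u ↦ (s.map (· + u)).esymm j := by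
  rcases le_or_gt j (card s) with hj | hj
  · simp_rw [esymm_map_add_eq_coeff_taylor s _ hj, taylor_coeff]
    exact Polynomial.continuous _
  · simp_rw [esymm_eq_zero_of_card_lt (show card (s.map _) < j by simpa using hj)]
    exact continuous_const

theorem exists_esymm_map_add_eq_zero {s : Multiset ℝ} {j : ℕ} (hj : j ≤ card s)
    (hs : s.esymm j ≤ 0) : ∃ u, 0 ≤ u ∧ (s.map (· + u)).esymm j = 0 := by
  obtain ⟨M, hM⟩ := s.toFinset.bddBelow
  have hT : 0 < (s.map (· + (|M| + 1))).esymm j := by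
    refine esymm_pos (fun x hx ↦ ?_) (by simpa using hj)
    obtain ⟨y, hy, rfl⟩ := mem_map.mp hx
    linarith [hM (mem_toFinset.mpr hy), neg_abs_le M]
  obtain ⟨u, hu, hu0⟩ := intermediate_value_Icc (by positivity)
    (continuous_esymm_map_add s j).continuousOn ⟨by simpa using hs, hT.le⟩
  exact ⟨u, hu.1, hu0⟩

theorem exists_card_mul_esymm_eq (s : Multiset ℝ) :
    ∃ t : Multiset ℝ, card t = card s - 1 ∧
      ∀ j < card s, (card s : ℝ) * t.esymm j = (card s - j) * s.esymm j := by
  obtain ⟨t, ht, hderiv⟩ := exists_derivative_prod_X_add_C_eq s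
  refine ⟨t, ht, fun j hj ↦ ?_⟩
  have := congrArg (coeff · (card s - 1 - j)) hderiv
  simp only [coeff_derivative, coeff_C_mul] at this
  rw [prod_X_add_C_coeff s (by omega), prod_X_add_C_coeff t (by omega), ht,
    show card s - 1 - j + 1 = card s - j by omega, show card s - (card s - j) = j by omega,
    show card s - 1 - (card s - 1 - j) = j by omega] at this
  rw [← this]
  push_cast [show j ≤ card s - 1 by omega, Nat.cast_sub (show 1 ≤ card s by omega)]
  ring

theorem esymm_nonpos_of_card_eq {s : Multiset ℝ} {k : ℕ} (hcard : card s = k + 2)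
    (hk : 0 < s.esymm k) (hk1 : s.esymm (k + 1) = 0) : s.esymm (k + 2) ≤ 0 := by
  by_contra! hprod
  rw [← hcard, esymm_card] at hprod
  have hne : ∀ x ∈ s, x ≠ 0 := fun x hx h0 ↦ hprod.ne' (prod_eq_zero (h0 ▸ hx))
  set r := s.map (·⁻¹)
  have h1 : r.esymm 1 * s.prod = s.esymm (k + 1) := esymm_map_inv_mul_prod hne (by omega)
  have h2 : r.esymm 2 * s.prod = s.esymm k := esymm_map_inv_mul_prod hne (by omega)
  have hr1 : r.esymm 1 = 0 := by
    rw [hk1] at h1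
    exact (mul_eq_zero.mp h1).resolve_right hprod.ne'
  have hr2 : 0 < r.esymm 2 := pos_of_mul_pos_left (h2 ▸ hk) hprod.le
  have hsq : 0 ≤ (r.map (· ^ 2)).sum := sum_nonneg fun x hx ↦ by
    obtain ⟨y, -, rfl⟩ := mem_map.mp hx
    positivity
  have := sq_sum_eq_sum_sq_add_two_mul_esymm_two r
  rw [← esymm_one, hr1] at this
  linarith

theorem esymm_nonpos_of_esymm_eq_zero {s : Multiset ℝ} {k : ℕ} (hk : 0 < s.esymm k)
    (hk1 : s.esymm (k + 1) = 0) : s.esymm (k + 2) ≤ 0 := by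
  induction hN : card s generalizing s with
  | zero => rw [esymm_eq_zero_of_card_lt (by omega)]
  | succ N ih =>
    rcases lt_trichotomy (N + 1) (k + 2) with hlt | heq | hgt
    · rw [esymm_eq_zero_of_card_lt (by omega)]
    · exact esymm_nonpos_of_card_eq (by omega) hk hk1
    obtain ⟨t, ht, hst⟩ := exists_card_mul_esymm_eq s
    rw [hN, Nat.add_sub_cancel] at ht
    rw [hN] at hst
    have hN0 : (0 : ℝ) < (N + 1 : ℕ) := by positivity
    have hsub : ∀ j < N + 1, (0 : ℝ) < (N + 1 : ℕ) - j := fun j hj ↦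
      sub_pos.mpr (by exact_mod_cast hj)
    have htk : 0 < t.esymm k :=
      pos_of_mul_pos_right (hst k (by omega) ▸ mul_pos (hsub k (by omega)) hk) hN0.le
    have htk1 : t.esymm (k + 1) = 0 := by
      have := hst (k + 1) (by omega)
      rw [hk1, mul_zero] at this
      exact (mul_eq_zero.mp this).resolve_left hN0.ne'
    have hprod : ((N + 1 : ℕ) - (k + 2 : ℕ) : ℝ) * s.esymm (k + 2) ≤ 0 :=
      hst (k + 2) (by omega) ▸ mul_nonpos_of_nonneg_of_nonpos (Nat.cast_nonneg _) (ih htk htk1 ht)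
    exact nonpos_of_mul_nonpos_right hprod (hsub (k + 2) hgt)

/-- `Γ_k` for multisets; the condition at `j = 0` holds automatically. -/
def gammaCone (k : ℕ) : Set (Multiset ℝ) := {s | ∀ j ≤ k, 0 < s.esymm j}

theorem gammaCone_antitone : Antitone gammaCone :=
  fun _ _ hkl _ hs j hj ↦ hs j (hj.trans hkl)

theorem le_card_of_mem_gammaCone {s : Multiset ℝ} {k : ℕ} (hs : s ∈ gammaCone k) :
    k ≤ card s := by
  by_contra! h
  exact (hs k le_rfl).ne' (esymm_eq_zero_of_card_lt h)

theorem map_add_mem_gammaCone {s : Multiset ℝ} {k : ℕ} (hs : s ∈ gammaCone k) {u : ℝ}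
    (hu : 0 ≤ u) : s.map (· + u) ∈ gammaCone k := fun j hj ↦
  (hs j hj).trans_le (esymm_le_esymm_map_add (fun i hi ↦ (hs i (hi.trans hj)).le) hu)

theorem mem_gammaCone_of_cons_mem {a : ℝ} {s : Multiset ℝ} {k : ℕ}
    (h : a ::ₘ s ∈ gammaCone (k + 1)) : s ∈ gammaCone k := by
  induction k generalizing a s with
  | zero =>
    intro j hj
    simp [Nat.le_zero.mp hj, esymm_zero]
  | succ k ih =>
    have hs : s ∈ gammaCone k := ih (gammaCone_antitone (Nat.le_succ _) h)
    intro j hj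
    rcases hj.lt_or_eq with hlt | rfl
    · exact hs j (by omega)
    by_contra! hle
    have hcard := le_card_of_mem_gammaCone h
    rw [card_cons] at hcard
    obtain ⟨u, hu, hzero⟩ := exists_esymm_map_add_eq_zero (by omega) hle
    have ht : (a + u) ::ₘ s.map (· + u) ∈ gammaCone (k + 2) := by
      simpa using map_add_mem_gammaCone h hu
    have htop := ht (k + 2) le_rfl
    rw [esymm_cons, hzero, mul_zero, add_zero] at htop
    have hbot := ih (gammaCone_antitone (by omega) ht) k le_rfl
    exact htop.not_ge (esymm_nonpos_of_esymm_eq_zero hbot hzero)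

theorem pos_of_cons_mem_gammaCone {a : ℝ} {s : Multiset ℝ} (h : a ::ₘ s ∈ gammaCone 1)
    (hmax : ∀ x ∈ s, x ≤ a) : 0 < a := by
  have hsum := h 1 le_rfl
  rw [esymm_one, sum_cons] at hsum
  by_contra! ha
  have := sum_le_card_nsmul s a hmax
  rw [nsmul_eq_mul] at this
  nlinarith [(Nat.cast_nonneg (card s) : (0 : ℝ) ≤ card s)]

end Multiset

theorem List.prod_take_le_esymm {l : List ℝ} (hl : l.Pairwise (· ≥ ·)) {k : ℕ}
    (hΓ : (l : Multiset ℝ) ∈ gammaCone (k + 1)) : (l.take k).prod ≤ (l : Multiset ℝ).esymm k := by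
  induction k generalizing l with
  | zero => simp [Multiset.esymm_zero]
  | succ k ih =>
    obtain _ | ⟨a, l⟩ := l
    · exact absurd (le_card_of_mem_gammaCone hΓ) (by simp)
    rw [List.pairwise_cons] at hl
    rw [← Multiset.cons_coe] at hΓ ⊢
    have ha := pos_of_cons_mem_gammaCone (gammaCone_antitone (by omega) hΓ) hl.1
    have hl' := mem_gammaCone_of_cons_mem hΓ
    rw [List.take_succ_cons, List.prod_cons, Multiset.esymm_cons]
    nlinarith [ih hl.2 (gammaCone_antitone (by omega) hl'), hl' (k + 1) le_rfl]

theorem S_eq_esymm_ofFn (n k : ℕ) (lam : Fin n → ℝ) :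
    S n k lam = (List.ofFn lam : Multiset ℝ).esymm k := by
  rw [← Fin.univ_val_map, Finset.esymm_map_val]
  rfl

theorem stmt3_general (n m : ℕ) (hm : 1 ≤ m) (lam : Fin n → ℝ)
    (hdec : ∀ i j : Fin n, i ≤ j → lam j ≤ lam i)
    (hlam : lam ∈ GammaCone n m) :
    (∏ i ∈ Finset.univ.filter (fun i : Fin n => (i : ℕ) < m - 1), lam i)
      ≤ S n (m - 1) lam := by
  obtain ⟨k, rfl⟩ : ∃ k, m = k + 1 := ⟨m - 1, by omega⟩
  have hΓ : (List.ofFn lam : Multiset ℝ) ∈ gammaCone (k + 1) := fun j hj ↦ by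
    rcases j with _ | j
    · simp [esymm_zero]
    · exact S_eq_esymm_ofFn n _ lam ▸ hlam _ (by omega) hj
  have hsorted : (List.ofFn lam).Pairwise (· ≥ ·) :=
    List.pairwise_ofFn.mpr fun i j hij ↦ hdec i j hij.le
  rw [Nat.add_sub_cancel, S_eq_esymm_ofFn, ← List.prod_take_ofFn]
  exact List.prod_take_le_esymm hsorted hΓ

theorem stmt3 (n m : ℕ) (hm : 1 ≤ m) (hmn : m ≤ n) (lam : Fin n → ℝ)
    (hdec : ∀ i j : Fin n, i ≤ j → lam j ≤ lam i)
    (hlam : lam ∈ GammaCone n m) :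
    (∏ i ∈ Finset.univ.filter (fun i : Fin n => (i : ℕ) < m - 1), lam i)
      ≤ S n (m - 1) lam :=
  stmt3_general n m hm lam hdec hlam
end

section
/- Let 1 ≤ k ≤ m−1 ≤ n−1 and let {i_1,…,i_k} ⊆ {1,…,n}. There is a constant C depending only on n and k (one may take C = (n−k)^k) such that for every λ ∈ Γ_m, |λ_{i_1} λ_{i_2} ⋯ λ_{i_k}| ≤ C · S_k(λ). -/
open Finset

/-!
Let `M` be the indices of the `k` largest entries of `λ`. Restricting `λ ∈ Γ_m` to the complement
of `D` lands in `Γ_{m - #D}`; with `D = M` this says the entries outside `M` have positive sum.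
Hence the entries in `M` are positive, each entry outside `M` has absolute value at most
`(n - k) λ_j` for every `j ∈ M`, and `∏_{j ∈ M} λ_j ≤ S_k(λ)` by peeling off one index at a time
with `S_{j+1}(λ) = S_{j+1}(λ|i) + λ_i S_j(λ|i)`. Comparing `I` with `M` entry by entry gives the bound.

The restriction property `λ ∈ Γ_{m+1}(T) → λ|i ∈ Γ_m(T \ {i})` is proved by strong induction on `T`,
together with the closure property `S_1, …, S_m ≥ 0, S_{m+1} > 0 → S_m > 0`; both rest on the
fact that adding a nonnegative constant to all entries preserves these sign conditions.
-/

section Products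

variable {ι R : Type*}

theorem exists_subset_card_eq_forall_le [DecidableEq ι] [LinearOrder R] (f : ι → R)
    (T : Finset ι) {k : ℕ} (hk : k ≤ #T) :
    ∃ M ⊆ T, #M = k ∧ ∀ j ∈ M, ∀ x ∈ T \ M, f x ≤ f j := by
  induction k with
  | zero => exact ⟨∅, empty_subset T, card_empty, by simp⟩
  | succ k ih =>
    obtain ⟨M, hMT, hMk, htop⟩ := ih (by omega)
    obtain ⟨a, ha, hmax⟩ := exists_max_image (T \ M) f
      (by rw [← card_pos, card_sdiff_of_subset hMT]; omega)
    have haM : a ∉ M := (mem_sdiff.1 ha).2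
    refine ⟨insert a M, insert_subset (mem_sdiff.1 ha).1 hMT,
      by rw [card_insert_of_notMem haM, hMk], fun j hj x hx => ?_⟩
    rw [sdiff_insert] at hx
    rcases mem_insert.1 hj with rfl | hjM
    · exact hmax x (mem_of_mem_erase hx)
    · exact htop j hjM x (mem_of_mem_erase hx)

variable [CommSemiring R] [LinearOrder R] [IsStrictOrderedRing R]

theorem prod_le_prod_of_forall_le_of_card_eq {A B : Finset ι} (hcard : #A = #B) {f g : ι → R}
    (hf : ∀ i ∈ A, 0 ≤ f i) (hfg : ∀ i ∈ A, ∀ j ∈ B, f i ≤ g j) :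
    ∏ i ∈ A, f i ≤ ∏ j ∈ B, g j := by
  rcases A.eq_empty_or_nonempty with rfl | hA
  · rw [card_empty, eq_comm, card_eq_zero] at hcard
    simp [hcard]
  obtain ⟨a, ha, hmax⟩ := exists_max_image A f hA
  calc ∏ i ∈ A, f i ≤ ∏ _i ∈ A, f a := prod_le_prod hf hmax
    _ = ∏ _j ∈ B, f a := by rw [prod_const, prod_const, hcard]
    _ ≤ ∏ j ∈ B, g j := prod_le_prod (fun _ _ => hf a ha) (hfg a ha)

theorem prod_le_prod_of_card_eq [DecidableEq ι] {I M : Finset ι} (hcard : #I = #M) {f g : ι → R}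
    (hf : ∀ i ∈ I, 0 ≤ f i) (hcommon : ∀ i ∈ I ∩ M, f i ≤ g i)
    (hrest : ∀ i ∈ I \ M, ∀ j ∈ M \ I, f i ≤ g j) :
    ∏ i ∈ I, f i ≤ ∏ j ∈ M, g j := by
  have hcard' : #(I \ M) = #(M \ I) := by
    have hI := card_sdiff_add_card_inter I M
    have hM := card_sdiff_add_card_inter M I
    rw [inter_comm] at hM
    omega
  have hrest' := prod_le_prod_of_forall_le_of_card_eq hcard'
    (fun i hi => hf i (mem_sdiff.1 hi).1) hrest
  have hfI : 0 ≤ ∏ i ∈ I \ M, f i := prod_nonneg fun i hi => hf i (mem_sdiff.1 hi).1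
  rw [← prod_sdiff (inter_subset_left : I ∩ M ⊆ I), ← prod_sdiff (inter_subset_right : I ∩ M ⊆ M),
    sdiff_inter_self_left, sdiff_inter_self_right]
  exact mul_le_mul hrest' (prod_le_prod (fun i hi => hf i (mem_inter.1 hi).1) hcommon)
    (prod_nonneg fun i hi => hf i (mem_inter.1 hi).1) (hfI.trans hrest')

end Products

theorem abs_le_card_mul_of_sum_pos {ι : Type*} [DecidableEq ι] {U : Finset ι} {f : ι → ℝ} {b : ℝ}
    (hsum : 0 < ∑ x ∈ U, f x) (hle : ∀ x ∈ U, f x ≤ b) (hb : 0 ≤ b) {i : ι} (hi : i ∈ U) :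
    |f i| ≤ #U * b := by
  have hrest : ∑ x ∈ U.erase i, f x ≤ #U * b :=
    calc ∑ x ∈ U.erase i, f x ≤ #(U.erase i) • b :=
          sum_le_card_nsmul _ _ _ fun x hx => hle x (mem_of_mem_erase hx)
      _ ≤ #U * b := by
          rw [nsmul_eq_mul]
          gcongr
          exact erase_subset i U
  have hU : (1 : ℝ) ≤ #U := by exact_mod_cast card_pos.2 ⟨i, hi⟩
  rw [← add_sum_erase U f hi] at hsum
  rw [abs_le]
  constructor <;> nlinarith [hle i hi]

theorem sum_powersetCard_sum_powersetCard {ι β : Type*} [DecidableEq ι] [AddCommMonoid β]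
    (s : Finset ι) {r k : ℕ} (hrk : r ≤ k) (g : Finset ι → β) :
    ∑ A ∈ powersetCard k s, ∑ B ∈ powersetCard r A, g B
      = ∑ B ∈ powersetCard r s, (#s - r).choose (k - r) • g B := by
  rw [sum_comm' (t' := powersetCard r s) (s' := fun B : Finset ι => (powersetCard k s).filter (B ⊆ ·))]
  · refine sum_congr rfl fun B hB => ?_
    obtain ⟨hBs, hBr⟩ := mem_powersetCard.1 hB
    rw [sum_const, card_filter_powersetCard_subset B s k hBs (hBr ▸ hrk), hBr]
  · intro A B
    simp only [mem_powersetCard, mem_filter]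
    exact ⟨fun ⟨⟨hAs, hAk⟩, hBA, hBr⟩ => ⟨⟨⟨hAs, hAk⟩, hBA⟩, hBA.trans hAs, hBr⟩,
      fun ⟨⟨⟨hAs, hAk⟩, hBA⟩, _, hBr⟩ => ⟨⟨hAs, hAk⟩, hBA, hBr⟩⟩

variable {n : ℕ}

section ElementarySymmetric

variable {T : Finset (Fin n)} {k m : ℕ} {lam : Fin n → ℝ}

theorem SRes_univ (k : ℕ) (lam : Fin n → ℝ) : SRes n univ k lam = S n k lam := rfl

theorem SRes_zero (T : Finset (Fin n)) (lam : Fin n → ℝ) : SRes n T 0 lam = 1 := by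
  simp [SRes]

theorem SRes_one (T : Finset (Fin n)) (lam : Fin n → ℝ) : SRes n T 1 lam = ∑ i ∈ T, lam i := by
  simp [SRes, powersetCard_one]

theorem le_card_of_SRes_pos (h : 0 < SRes n T k lam) : k ≤ #T := by
  by_contra hk
  simp [SRes, powersetCard_eq_empty.2 (not_le.1 hk)] at h

theorem SRes_pos_of_forall_pos (hpos : ∀ i ∈ T, 0 < lam i) (hk : k ≤ #T) :
    0 < SRes n T k lam :=
  sum_pos (fun _ hA => prod_pos fun i hi => hpos i ((mem_powersetCard.1 hA).1 hi))
    (powersetCard_nonempty.2 hk)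

theorem SRes_nonneg_of_le (h : ∀ j, 1 ≤ j → j ≤ m → 0 ≤ SRes n T j lam) (hk : k ≤ m) :
    0 ≤ SRes n T k lam := by
  rcases k.eq_zero_or_pos with rfl | hk1
  · rw [SRes_zero]
    exact zero_le_one
  · exact h k hk1 hk

theorem SRes_insert {a : Fin n} (ha : a ∉ T) (k : ℕ) (lam : Fin n → ℝ) :
    SRes n (insert a T) (k + 1) lam = SRes n T (k + 1) lam + lam a * SRes n T k lam := by
  have haA : ∀ A ∈ powersetCard k T, a ∉ A := fun A hA h => ha ((mem_powersetCard.1 hA).1 h)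
  rw [SRes, powersetCard_succ_insert ha, sum_union, sum_image, SRes, SRes, mul_sum]
  · exact congrArg _ (sum_congr rfl fun A hA => prod_insert (haA A hA))
  · exact insert_erase_invOn.2.injOn.mono haA
  · refine disjoint_left.2 fun A hA hA' => ?_
    obtain ⟨B, -, rfl⟩ := mem_image.1 hA'
    exact ha ((mem_powersetCard.1 hA).1 (mem_insert_self a B))

theorem SRes_erase {i : Fin n} (hi : i ∈ T) (k : ℕ) (lam : Fin n → ℝ) :
    SRes n T (k + 1) lam
      = SRes n (T.erase i) (k + 1) lam + lam i * SRes n (T.erase i) k lam := by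
  conv_lhs => rw [← insert_erase hi]
  exact SRes_insert (notMem_erase i T) k lam

theorem sum_SRes_erase (T : Finset (Fin n)) (k : ℕ) (lam : Fin n → ℝ) :
    ∑ i ∈ T, SRes n (T.erase i) k lam = ((#T - k : ℕ) : ℝ) * SRes n T k lam := by
  have herase : ∀ i, powersetCard k (T.erase i) = (powersetCard k T).filter (i ∉ ·) := by
    intro i
    ext A
    simp only [mem_powersetCard, mem_filter, subset_erase]
    tauto
  simp only [SRes, herase, sum_filter]
  rw [sum_comm, mul_sum]
  refine sum_congr rfl fun A hA => ?_
  obtain ⟨hAT, hAk⟩ := mem_powersetCard.1 hA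
  rw [← sum_filter, sum_const, nsmul_eq_mul, ← sdiff_eq_filter, card_sdiff_of_subset hAT, hAk]

theorem SRes_add_const (T : Finset (Fin n)) (k : ℕ) (lam : Fin n → ℝ) (t : ℝ) :
    SRes n T k (fun i => lam i + t)
      = ∑ r ∈ range (k + 1), ((#T - r).choose (k - r) : ℝ) * t ^ (k - r) * SRes n T r lam := by
  have hexpand : ∀ A ∈ powersetCard k T, ∏ i ∈ A, (lam i + t)
      = ∑ r ∈ range (k + 1), ∑ B ∈ powersetCard r A, t ^ (k - r) * ∏ i ∈ B, lam i := by
    intro A hA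
    have hAk := (mem_powersetCard.1 hA).2
    rw [Finset.prod_add, sum_powerset, hAk]
    refine sum_congr rfl fun r _ => sum_congr rfl fun B hB => ?_
    obtain ⟨hBA, hBr⟩ := mem_powersetCard.1 hB
    rw [prod_const, card_sdiff_of_subset hBA, hBr, hAk, mul_comm]
  rw [SRes, sum_congr rfl hexpand, sum_comm]
  refine sum_congr rfl fun r hr => ?_
  rw [sum_powersetCard_sum_powersetCard T (Nat.lt_succ_iff.1 (mem_range.1 hr)), SRes, mul_sum]
  refine sum_congr rfl fun B _ => ?_
  rw [nsmul_eq_mul]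
  ring

theorem SRes_le_SRes_add_const (hnn : ∀ j, 1 ≤ j → j ≤ m → 0 ≤ SRes n T j lam)
    (hk : k ≤ m + 1) {t : ℝ} (ht : 0 ≤ t) :
    SRes n T k lam ≤ SRes n T k (fun i => lam i + t) := by
  rw [SRes_add_const, sum_range_succ]
  simp only [Nat.sub_self, Nat.choose_zero_right, Nat.cast_one, pow_zero, one_mul]
  refine le_add_of_nonneg_left (sum_nonneg fun r hr => ?_)
  have := SRes_nonneg_of_le hnn (show r ≤ m by have := mem_range.1 hr; omega)
  positivity

theorem SRes_add_const_pos (hnn : ∀ j, 1 ≤ j → j ≤ m → 0 ≤ SRes n T j lam)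
    (hk : k ≤ m) (hkT : k ≤ #T) {t : ℝ} (ht : 0 < t) :
    0 < SRes n T k (fun i => lam i + t) := by
  rw [SRes_add_const]
  refine sum_pos' (fun r hr => ?_) ⟨0, by simp, ?_⟩
  · have := SRes_nonneg_of_le hnn (show r ≤ m by have := mem_range.1 hr; omega)
    positivity
  · rw [SRes_zero, Nat.sub_zero, Nat.sub_zero, mul_one]
    have := Nat.choose_pos hkT
    positivity

theorem continuous_SRes_add_const (T : Finset (Fin n)) (k : ℕ) (lam : Fin n → ℝ) :
    Continuous fun t : ℝ => SRes n T k (fun i => lam i + t) := by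
  unfold SRes
  fun_prop

theorem SRes_nonneg_of_forall_add_const_pos
    (h : ∀ t : ℝ, 0 < t → 0 < SRes n T k (fun i => lam i + t)) : 0 ≤ SRes n T k lam := by
  have hlim := ((continuous_SRes_add_const T k lam).tendsto 0).mono_left
    (nhdsWithin_le_nhds (s := Set.Ioi 0))
  simpa using ge_of_tendsto hlim (eventually_nhdsWithin_of_forall fun t ht => (h t ht).le)

theorem exists_add_const_SRes_eq_zero (h : SRes n T k lam ≤ 0) (hk : k ≤ #T) :
    ∃ t ≥ 0, SRes n T k (fun i => lam i + t) = 0 := by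
  set t₁ : ℝ := 1 + ∑ i ∈ T, |lam i|
  have hpos : 0 < SRes n T k (fun i => lam i + t₁) := by
    refine SRes_pos_of_forall_pos (fun i hi => ?_) hk
    linarith [neg_abs_le (lam i), single_le_sum (fun j _ => abs_nonneg (lam j)) hi]
  obtain ⟨t, ht, ht0⟩ := intermediate_value_Icc (by positivity : (0 : ℝ) ≤ t₁)
    (continuous_SRes_add_const T k lam).continuousOn
    (show (0 : ℝ) ∈ Set.Icc _ _ from ⟨by simpa using h, hpos.le⟩)
  exact ⟨t, ht.1, ht0⟩

end ElementarySymmetric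

/-- `Γ_m` for the variables indexed by `T`. -/
def GammaConeOn (T : Finset (Fin n)) (m : ℕ) : Set (Fin n → ℝ) :=
  {lam | ∀ j, 1 ≤ j → j ≤ m → 0 < SRes n T j lam}

section GammaConeOn

variable {T : Finset (Fin n)} {m : ℕ} {lam : Fin n → ℝ}

theorem GammaConeOn_antitone (T : Finset (Fin n)) : Antitone (GammaConeOn T) :=
  fun _ _ hm _ hlam j hj1 hj2 => hlam j hj1 (hj2.trans hm)

theorem add_const_mem_GammaConeOn (hlam : lam ∈ GammaConeOn T m) {t : ℝ} (ht : 0 ≤ t) :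
    (fun i => lam i + t) ∈ GammaConeOn T m := fun j hj1 hj2 =>
  (hlam j hj1 hj2).trans_le <| SRes_le_SRes_add_const (m := j - 1)
    (fun r hr1 hr2 => (hlam r hr1 (by omega)).le) (by omega) ht

theorem add_const_mem_GammaConeOn_succ (hnn : ∀ j, 1 ≤ j → j ≤ m → 0 ≤ SRes n T j lam)
    (hpos : 0 < SRes n T (m + 1) lam) {t : ℝ} (ht : 0 < t) :
    (fun i => lam i + t) ∈ GammaConeOn T (m + 1) := by
  intro j hj1 hj2
  rcases hj2.lt_or_eq with hjm | rfl
  · exact SRes_add_const_pos hnn (by omega) (by have := le_card_of_SRes_pos hpos; omega) ht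
  · exact hpos.trans_le (SRes_le_SRes_add_const hnn le_rfl ht.le)

/-- If `S_{m+1}(λ|i)` were not positive, shifting `λ` by a constant until it vanishes would give
a point of `Γ_{m+2}(T)` whose restriction to `T.erase i` contradicts `hclosure`. -/
theorem erase_mem_GammaConeOn_of_forall_erase
    (hclosure : ∀ i ∈ T, ∀ (m : ℕ) (lam : Fin n → ℝ),
      (∀ j, 1 ≤ j → j ≤ m → 0 ≤ SRes n (T.erase i) j lam) →
      0 < SRes n (T.erase i) (m + 1) lam → 0 < SRes n (T.erase i) m lam)
    {i : Fin n} (hi : i ∈ T) :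
    ∀ (m : ℕ) (lam : Fin n → ℝ), lam ∈ GammaConeOn T (m + 1) → lam ∈ GammaConeOn (T.erase i) m := by
  intro m
  induction m with
  | zero => exact fun _ _ j hj1 hj2 => absurd hj2 (by omega)
  | succ m ih =>
    intro lam hlam j hj1 hj2
    have hlow := ih lam (GammaConeOn_antitone T (by omega) hlam)
    rcases hj2.lt_or_eq with hjm | rfl
    · exact hlow j hj1 (by omega)
    by_contra hneg
    have hcard := le_card_of_SRes_pos (hlam (m + 2) (by omega) le_rfl)
    obtain ⟨t, ht, hzero⟩ := exists_add_const_SRes_eq_zero (not_lt.1 hneg)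
      (by rw [card_erase_of_mem hi]; omega)
    have hshift := add_const_mem_GammaConeOn hlam ht
    have hnn : ∀ j, 1 ≤ j → j ≤ m + 1 → 0 ≤ SRes n (T.erase i) j (fun x => lam x + t) := by
      intro j hj1 hj2
      rcases hj2.lt_or_eq with hjm | rfl
      · exact (ih _ (GammaConeOn_antitone T (by omega) hshift) j hj1 (by omega)).le
      · exact hzero.ge
    have hpos : 0 < SRes n (T.erase i) (m + 2) (fun x => lam x + t) := by
      have := hshift (m + 2) (by omega) le_rfl
      rwa [SRes_erase hi, hzero, mul_zero, add_zero] at this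
    exact (hclosure i hi (m + 1) _ hnn hpos).ne' hzero

/-- If `S_m(λ) = 0`, then every `S_m(λ|l)` vanishes (they are nonnegative, by the restriction
property for `R` applied to `λ + t` with `t → 0⁺`, and sum to `(#R - m) S_m(λ)`), while
`S_{m+1}(λ|l) = S_{m+1}(λ) > 0`: a counterexample on a smaller set. -/
theorem SRes_pos_of_nonneg_of_SRes_succ_pos (R : Finset (Fin n)) :
    ∀ (m : ℕ) (lam : Fin n → ℝ), (∀ j, 1 ≤ j → j ≤ m → 0 ≤ SRes n R j lam) →
      0 < SRes n R (m + 1) lam → 0 < SRes n R m lam := by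
  induction R using Finset.strongInduction with
  | H R ih =>
  intro m lam hnn hpos
  have hnn_erase : ∀ l ∈ R, ∀ j, 1 ≤ j → j ≤ m → 0 ≤ SRes n (R.erase l) j lam :=
    fun l hl j hj1 hj2 => SRes_nonneg_of_forall_add_const_pos fun t ht =>
      erase_mem_GammaConeOn_of_forall_erase (fun i hi => ih _ (erase_ssubset hi)) hl m _
        (add_const_mem_GammaConeOn_succ hnn hpos ht) j hj1 hj2
  by_contra hneg
  have hzero : SRes n R m lam = 0 := le_antisymm (not_lt.1 hneg) (SRes_nonneg_of_le hnn le_rfl)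
  have hsum : ∑ l ∈ R, SRes n (R.erase l) m lam = 0 := by
    rw [sum_SRes_erase, hzero, mul_zero]
  obtain ⟨l, hl⟩ : R.Nonempty := card_pos.1 (by have := le_card_of_SRes_pos hpos; omega)
  have hl0 : SRes n (R.erase l) m lam = 0 :=
    (sum_eq_zero_iff_of_nonneg fun l hl => SRes_nonneg_of_le (hnn_erase l hl) le_rfl).1 hsum l hl
  have hposl : 0 < SRes n (R.erase l) (m + 1) lam := by
    rwa [SRes_erase hl, hl0, mul_zero, add_zero] at hpos
  exact (ih _ (erase_ssubset hl) m lam (hnn_erase l hl) hposl).ne' hl0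

theorem erase_mem_GammaConeOn (hlam : lam ∈ GammaConeOn T (m + 1)) {i : Fin n} (hi : i ∈ T) :
    lam ∈ GammaConeOn (T.erase i) m :=
  erase_mem_GammaConeOn_of_forall_erase (fun _ _ => SRes_pos_of_nonneg_of_SRes_succ_pos _) hi
    m lam hlam

theorem sdiff_mem_GammaConeOn {D : Finset (Fin n)} (hD : D ⊆ T) :
    ∀ {m : ℕ}, lam ∈ GammaConeOn T (m + #D) → lam ∈ GammaConeOn (T \ D) m := by
  induction D using Finset.induction_on with
  | empty => simp
  | insert a D ha ih =>
    intro m hlam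
    rw [card_insert_of_notMem ha, ← add_assoc, add_right_comm] at hlam
    have haTD : a ∈ T \ D := mem_sdiff.2 ⟨hD (mem_insert_self a D), ha⟩
    rw [sdiff_insert]
    exact erase_mem_GammaConeOn (ih ((subset_insert a D).trans hD) hlam) haTD

theorem sum_sdiff_pos {M : Finset (Fin n)} (hMT : M ⊆ T) (hlam : lam ∈ GammaConeOn T (#M + 1)) :
    0 < ∑ x ∈ T \ M, lam x := by
  rw [add_comm] at hlam
  simpa [SRes_one] using sdiff_mem_GammaConeOn hMT hlam 1 le_rfl le_rfl

theorem pos_of_mem_top {M : Finset (Fin n)} (hMT : M ⊆ T) (hlam : lam ∈ GammaConeOn T (#M + 1))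
    (htop : ∀ j ∈ M, ∀ x ∈ T \ M, lam x ≤ lam j) {j : Fin n} (hj : j ∈ M) : 0 < lam j := by
  obtain ⟨x, hx, hxpos⟩ := exists_lt_of_sum_lt (f := fun _ => (0 : ℝ))
    (by simpa using sum_sdiff_pos hMT hlam)
  exact hxpos.trans_le (htop j hj x hx)

theorem prod_le_SRes_of_top {M : Finset (Fin n)} (hMT : M ⊆ T)
    (hlam : lam ∈ GammaConeOn T (#M + 1)) (htop : ∀ j ∈ M, ∀ x ∈ T \ M, lam x ≤ lam j) :
    ∏ i ∈ M, lam i ≤ SRes n T #M lam := by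
  induction M using Finset.induction_on generalizing T with
  | empty => simp [SRes_zero]
  | insert a M ha ih =>
    have ha_pos := pos_of_mem_top hMT hlam htop (mem_insert_self a M)
    rw [card_insert_of_notMem ha] at hlam ⊢
    have haT := hMT (mem_insert_self a M)
    have hlam' := erase_mem_GammaConeOn hlam haT
    have hMT' : M ⊆ T.erase a := fun x hx =>
      mem_erase.2 ⟨ne_of_mem_of_not_mem hx ha, hMT (mem_insert_of_mem hx)⟩
    have htop' : ∀ j ∈ M, ∀ x ∈ T.erase a \ M, lam x ≤ lam j := fun j hj x hx =>
      htop j (mem_insert_of_mem hj) x (by rwa [erase_sdiff_comm, ← sdiff_insert] at hx)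
    calc ∏ i ∈ insert a M, lam i = lam a * ∏ i ∈ M, lam i := prod_insert ha
      _ ≤ lam a * SRes n (T.erase a) #M lam := by
          gcongr
          exact ih hMT' hlam' htop'
      _ ≤ SRes n (T.erase a) (#M + 1) lam + lam a * SRes n (T.erase a) #M lam :=
          le_add_of_nonneg_left (hlam' _ (by omega) le_rfl).le
      _ = SRes n T (#M + 1) lam := (SRes_erase haT _ _).symm

end GammaConeOn

theorem stmt4 (n m k : ℕ) (hk : 1 ≤ k) (hkm : k ≤ m - 1) (hmn : m ≤ n)
    (I : Finset (Fin n)) (hI : I.card = k) (lam : Fin n → ℝ)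
    (hlam : lam ∈ GammaCone n m) :
    |∏ i ∈ I, lam i| ≤ ((n - k : ℕ) : ℝ) ^ k * S n k lam := by
  obtain ⟨M, -, hMk, htop⟩ := exists_subset_card_eq_forall_le lam univ (k := k) (by simp; omega)
  have hΓ : lam ∈ GammaConeOn univ (#M + 1) :=
    GammaConeOn_antitone univ (by omega) (show lam ∈ GammaConeOn univ m from hlam)
  have hMpos : ∀ j ∈ M, 0 < lam j := fun j hj => pos_of_mem_top (subset_univ M) hΓ htop hj
  have hc : (1 : ℝ) ≤ ((n - k : ℕ) : ℝ) := by exact_mod_cast (by omega : 1 ≤ n - k)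
  have hout : ∀ i ∈ I \ M, ∀ j ∈ M \ I, |lam i| ≤ ((n - k : ℕ) : ℝ) * lam j := by
    intro i hi j hj
    have hj := (mem_sdiff.1 hj).1
    have := abs_le_card_mul_of_sum_pos (sum_sdiff_pos (subset_univ M) hΓ) (htop j hj)
      (hMpos j hj).le (mem_sdiff.2 ⟨mem_univ i, (mem_sdiff.1 hi).2⟩)
    rwa [card_sdiff_of_subset (subset_univ M), card_univ, Fintype.card_fin, hMk] at this
  calc |∏ i ∈ I, lam i| = ∏ i ∈ I, |lam i| := abs_prod I lam
    _ ≤ ∏ j ∈ M, ((n - k : ℕ) : ℝ) * lam j :=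
        prod_le_prod_of_card_eq (hI.trans hMk.symm) (fun _ _ => abs_nonneg _)
          (fun i hi => by
            have hi := hMpos i (mem_inter.1 hi).2
            rw [abs_of_pos hi]
            exact le_mul_of_one_le_left hi.le hc)
          hout
    _ = ((n - k : ℕ) : ℝ) ^ k * ∏ j ∈ M, lam j := by rw [prod_mul_distrib, prod_const, hMk]
    _ ≤ ((n - k : ℕ) : ℝ) ^ k * S n k lam := by
        gcongr
        simpa [hMk, SRes_univ] using prod_le_SRes_of_top (subset_univ M) hΓ htop
end
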